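/- arXiv:2310.11662 — 2 statements merged into one kernel-verified Lean document; each statement's English description precedes it below -/
import Mathlib

section
/- Let X be a finite set, F ⊆ 2^X a down-set, p ∈ [0,1], and λ : 2^X → [0,∞) a function with Σ_{S ⊆ X} λ(S)(1-p)^{|X \ S|} ≤ 1/2 and Σ_{S ⊇ A} λ(S) ≥ 1 for every A ∈ F. Then μ_p(F) ≤ 1/2. -/
open scoped Classical
open Finset

/-- `μ_p(𝓕) = ∑_{S ∈ 𝓕} p^{|S|} (1-p)^{|X \ S|}` for a family `𝓕` of subsets of a finite set. -/
noncomputable def muP {α : Type*} [Fintype α] (p : ℝ) (𝓕 : Finset (Finset α)) : ℝ :=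
  ∑ S ∈ 𝓕, p ^ S.card * (1 - p) ^ (Fintype.card α - S.card)

/-!
Double counting: each `A ∈ 𝓕` has weight `μ_p(A) ≤ μ_p(A) ∑_{S ⊇ A} λ(S)`, and exchanging the
sums, the members of `𝓕` below a fixed `S` have total weight at most `μ_p(2^S) = (1-p)^{|X \ S|}`,
the probability that a `p`-random set lies inside `S`.
-/

namespace MuP

variable {α : Type*} [Fintype α] {p : ℝ}

lemma weight_nonneg (hp : p ∈ Set.Icc (0 : ℝ) 1) (A : Finset α) :
    0 ≤ p ^ A.card * (1 - p) ^ (Fintype.card α - A.card) :=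
  mul_nonneg (pow_nonneg hp.1 _) (pow_nonneg (sub_nonneg.mpr hp.2) _)

lemma mono (hp : p ∈ Set.Icc (0 : ℝ) 1) {𝓐 𝓑 : Finset (Finset α)} (h : 𝓐 ⊆ 𝓑) :
    muP p 𝓐 ≤ muP p 𝓑 :=
  sum_le_sum_of_subset_of_nonneg h fun A _ _ => weight_nonneg hp A

lemma powerset_eq (p : ℝ) (S : Finset α) :
    muP p S.powerset = (1 - p) ^ (Fintype.card α - S.card) := by
  have split : ∀ A ∈ S.powerset, p ^ A.card * (1 - p) ^ (Fintype.card α - A.card)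
      = (1 - p) ^ (Fintype.card α - S.card) * (p ^ A.card * (1 - p) ^ (S.card - A.card)) := by
    intro A hA
    have hAS : A.card ≤ S.card := card_le_card (mem_powerset.mp hA)
    have hSX : S.card ≤ Fintype.card α := S.card_le_univ
    rw [show Fintype.card α - A.card = (Fintype.card α - S.card) + (S.card - A.card) by omega,
      pow_add]
    ring
  rw [muP, sum_congr rfl split, ← mul_sum, sum_pow_mul_eq_add_pow, add_sub_cancel, one_pow,
    mul_one]

lemma filter_subset_le (hp : p ∈ Set.Icc (0 : ℝ) 1) (𝓕 : Finset (Finset α)) (S : Finset α) :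
    muP p (𝓕.filter (· ⊆ S)) ≤ (1 - p) ^ (Fintype.card α - S.card) :=
  powerset_eq p S ▸ mono hp fun _ hA => mem_powerset.mpr (mem_filter.mp hA).2

lemma le_sum_of_fractional_cover (hp : p ∈ Set.Icc (0 : ℝ) 1) (𝓕 : Finset (Finset α))
    (lam : Finset α → ℝ) (hlam : ∀ S, 0 ≤ lam S)
    (hcover : ∀ A ∈ 𝓕, 1 ≤ ∑ S ∈ univ.filter (fun S => A ⊆ S), lam S) :
    muP p 𝓕 ≤ ∑ S : Finset α, lam S * (1 - p) ^ (Fintype.card α - S.card) := by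
  set w : Finset α → ℝ := fun A => p ^ A.card * (1 - p) ^ (Fintype.card α - A.card)
  calc muP p 𝓕
      ≤ ∑ A ∈ 𝓕, ∑ S ∈ univ.filter (fun S => A ⊆ S), lam S * w A :=
        sum_le_sum fun A hA => by
          rw [← sum_mul]
          exact le_mul_of_one_le_left (weight_nonneg hp A) (hcover A hA)
    _ = ∑ S : Finset α, lam S * muP p (𝓕.filter (· ⊆ S)) := by
        simp only [sum_filter, muP, mul_sum, mul_ite, mul_zero]
        exact sum_comm
    _ ≤ ∑ S : Finset α, lam S * (1 - p) ^ (Fintype.card α - S.card) :=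
        sum_le_sum fun S _ => mul_le_mul_of_nonneg_left (filter_subset_le hp 𝓕 S) (hlam S)

end MuP

theorem mu_le_half_of_fractional_certificate_general {α : Type*} [Fintype α]
    (𝓕 : Finset (Finset α)) (p : ℝ) (hp : p ∈ Set.Icc (0 : ℝ) 1)
    (lam : Finset α → ℝ) (hlam : ∀ S, 0 ≤ lam S)
    (hsum : ∑ S : Finset α, lam S * (1 - p) ^ (Fintype.card α - S.card) ≤ 1 / 2)
    (hcover : ∀ A ∈ 𝓕, 1 ≤ ∑ S ∈ Finset.univ.filter (fun S => A ⊆ S), lam S) :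
    muP p 𝓕 ≤ 1 / 2 :=
  (MuP.le_sum_of_fractional_cover hp 𝓕 lam hlam hcover).trans hsum

theorem mu_le_half_of_fractional_certificate {α : Type*} [Fintype α]
    (𝓕 : Finset (Finset α)) (p : ℝ) (hp : p ∈ Set.Icc (0 : ℝ) 1)
    (hdown : ∀ A ∈ 𝓕, ∀ B ⊆ A, B ∈ 𝓕)
    (lam : Finset α → ℝ) (hlam : ∀ S, 0 ≤ lam S)
    (hsum : ∑ S : Finset α, lam S * (1 - p) ^ (Fintype.card α - S.card) ≤ 1 / 2)
    (hcover : ∀ A ∈ 𝓕, 1 ≤ ∑ S ∈ Finset.univ.filter (fun S => A ⊆ S), lam S) :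
    muP p 𝓕 ≤ 1 / 2 :=
  mu_le_half_of_fractional_certificate_general 𝓕 p hp lam hlam hsum hcover
end

section
/- Suppose that for all n ≥ 1 and 0 < p ≤ ε·n^{-1/m_2(F)}: whenever H is a collection of graphs on [n] with Σ_{H∈H} exp(-δ e(H) p) ≤ 1/2, there exists an F-free graph sharing an edge with every H ∈ H (the main technical lemma with constants ε, δ ∈ (0,1/2]). Then the expectation threshold of the down-set F_n of F-free graphs on [n] satisfies q(F_n) ≥ (δε/2)·n^{-1/m_2(F)}. -/
open scoped Classical
open Finset

/-- The 2-density `m₂(F) = max_{J ⊆ F, v_J ≥ 3} (e_J - 1)/(v_J - 2)` of a graph. -/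
noncomputable def m2Dens {V : Type*} [Fintype V] (F : SimpleGraph V) : ℝ :=
  sSup {x : ℝ | ∃ J : F.Subgraph, 3 ≤ J.verts.ncard ∧
    x = ((J.edgeSet.ncard : ℝ) - 1) / ((J.verts.ncard : ℝ) - 2)}

/-- `G` is `F`-free: there is no embedding of `F` into `G` mapping edges to edges. -/
def FFree {V W : Type*} (F : SimpleGraph V) (G : SimpleGraph W) : Prop :=
  ¬ ∃ f : V ↪ W, ∀ a b, F.Adj a b → G.Adj (f a) (f b)

/-- The set of `p ∈ [0,1]` admitting a certificate for the down-set of `F`-free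
graphs on `[n]`: a collection `𝒢` of graphs on `[n]` such that every `F`-free graph is a
subgraph of some member of `𝒢` and `∑_{J ∈ 𝒢} (1-p)^{C(n,2) - e(J)} ≤ 1/2`. -/
noncomputable def certSet {V : Type*} [Fintype V] (F : SimpleGraph V) (n : ℕ) : Set ℝ :=
  {p | p ∈ Set.Icc (0 : ℝ) 1 ∧ ∃ 𝒢 : Finset (SimpleGraph (Fin n)),
    (∀ G : SimpleGraph (Fin n), FFree F G → ∃ J ∈ 𝒢, G ≤ J) ∧
    ∑ J ∈ 𝒢, (1 - p) ^ (n.choose 2 - J.edgeFinset.card) ≤ 1 / 2}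

/-!
Take a certificate `𝒢` for `q` and put `p = 2q/δ`. Since `e^{-2q} ≤ 1 - q` for `q ≤ 1/2`, the
complements `Jᶜ` of the members of `𝒢` satisfy `∑ e^{-δ e(Jᶜ) p} ≤ ∑ (1-q)^{C(n,2) - e(J)} ≤ 1/2`.
An `F`-free graph meeting every `Jᶜ` lies in no `J ∈ 𝒢`, contradicting the covering property, so
the lemma cannot apply at `p`: `2q/δ > ε n^{-1/m₂(F)}`. The bound `q ≤ 1/2` comes from
`m₂(F) ≥ 1`, witnessed by a path with two edges in `F`.
-/

open SimpleGraph

section TwoDensity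

variable {V : Type*} [Fintype V] (F : SimpleGraph V)

lemma bddAbove_twoDensities : BddAbove {x : ℝ | ∃ J : F.Subgraph, 3 ≤ J.verts.ncard ∧
    x = ((J.edgeSet.ncard : ℝ) - 1) / ((J.verts.ncard : ℝ) - 2)} := by
  refine ⟨Nat.card (Sym2 V), ?_⟩
  rintro x ⟨J, hJ, rfl⟩
  have hverts : (1 : ℝ) ≤ J.verts.ncard - 2 := by
    have : (3 : ℝ) ≤ J.verts.ncard := by exact_mod_cast hJ
    linarith
  have hedges : (J.edgeSet.ncard : ℝ) ≤ Nat.card (Sym2 V) := by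
    exact_mod_cast Set.ncard_le_card J.edgeSet
  refine div_le_of_le_mul₀ (by linarith) (by positivity) ?_
  nlinarith [(J.edgeSet.ncard).cast_nonneg (α := ℝ)]

variable {F} in
lemma one_le_m2Dens_of_adj {v a b : V} (ha : F.Adj v a) (hb : F.Adj v b) (hab : a ≠ b) :
    1 ≤ m2Dens F := by
  set J := F.subgraphOfAdj ha ⊔ F.subgraphOfAdj hb
  have hverts : J.verts.ncard = 3 := by
    rw [Set.ncard_eq_three]
    refine ⟨v, a, b, F.ne_of_adj ha, F.ne_of_adj hb, hab, ?_⟩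
    ext x
    simp only [J, Subgraph.verts_sup, subgraphOfAdj_verts, Set.mem_union, Set.mem_insert_iff,
      Set.mem_singleton_iff]
    tauto
  have hedges : J.edgeSet.ncard = 2 := by
    rw [Subgraph.edgeSet_sup, edgeSet_subgraphOfAdj, edgeSet_subgraphOfAdj,
      Set.singleton_union, Set.ncard_pair (Sym2.congr_right.not.mpr hab)]
  refine le_csSup (bddAbove_twoDensities F) ⟨J, hverts.ge, ?_⟩
  rw [hverts, hedges]
  norm_num

lemma one_le_m2Dens (hF : ∃ v, 2 ≤ F.degree v) : 1 ≤ m2Dens F := by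
  obtain ⟨v, hv⟩ := hF
  obtain ⟨a, ha, b, hb, hab⟩ := Finset.one_lt_card.mp hv
  rw [mem_neighborFinset] at ha hb
  exact one_le_m2Dens_of_adj ha hb hab

end TwoDensity

lemma FFree.bot {V W : Type*} {F : SimpleGraph V} (hF : F ≠ ⊥) : FFree F (⊥ : SimpleGraph W) := by
  rintro ⟨f, hf⟩
  obtain ⟨a, b, hab⟩ := ne_bot_iff_exists_adj.mp hF
  exact hf a b hab

lemma Real.exp_neg_two_mul_le_one_sub {x : ℝ} (h0 : 0 ≤ x) (h1 : x ≤ 1 / 2) :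
    Real.exp (-(2 * x)) ≤ 1 - x := by
  have h : 1 ≤ (1 - x) * Real.exp (2 * x) := by
    nlinarith [Real.add_one_le_exp (2 * x)]
  rwa [Real.exp_neg, inv_le_iff_one_le_mul₀ (Real.exp_pos _)]

lemma SimpleGraph.card_edgeFinset_compl {V : Type*} [Fintype V] (G : SimpleGraph V)
    [Fintype G.edgeSet] [Fintype Gᶜ.edgeSet] :
    #Gᶜ.edgeFinset = (Fintype.card V).choose 2 - #G.edgeFinset := by
  classical
  have : Gᶜ.edgeFinset = (⊤ : SimpleGraph V).edgeFinset \ G.edgeFinset := by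
    rw [← edgeFinset_sdiff]; congr! 1
  rw [this, card_sdiff_of_subset (edgeFinset_mono le_top), card_edgeFinset_top_eq_card_choose_two]

lemma SimpleGraph.not_nonempty_edgeFinset_inter_compl {V : Type*} {G J : SimpleGraph V}
    [Fintype G.edgeSet] [Fintype Jᶜ.edgeSet] (h : G ≤ J) :
    ¬ (G.edgeFinset ∩ Jᶜ.edgeFinset).Nonempty := by
  rw [Finset.not_nonempty_iff_eq_empty, ← Finset.disjoint_iff_inter_eq_empty, disjoint_edgeFinset]
  exact disjoint_compl_right.mono_left h

section Certificates

variable {V : Type*} [Fintype V] {F : SimpleGraph V} {n : ℕ}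

lemma pos_of_mem_certSet (hF : F ≠ ⊥) {q : ℝ} (hq : q ∈ certSet F n) : 0 < q := by
  obtain ⟨⟨hq0, -⟩, 𝒢, hcover, hsum⟩ := hq
  refine hq0.lt_of_ne fun hq_eq => ?_
  obtain ⟨J, hJ, -⟩ := hcover ⊥ (FFree.bot hF)
  have : (1 : ℝ) ≤ ∑ J ∈ 𝒢, (1 - q) ^ (n.choose 2 - #J.edgeFinset) := by
    simpa [← hq_eq] using Finset.card_pos.mpr ⟨J, hJ⟩
  linarith

lemma exists_compl_family_of_mem_certSet {q p δ : ℝ} (hq : q ∈ certSet F n)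
    (hp : Real.exp (-(δ * p)) ≤ 1 - q) :
    ∃ 𝓗 : Finset (SimpleGraph (Fin n)),
      ∑ H ∈ 𝓗, Real.exp (-(δ * #H.edgeFinset * p)) ≤ 1 / 2 ∧
      ∀ G, FFree F G → ∃ H ∈ 𝓗, ¬ (G.edgeFinset ∩ H.edgeFinset).Nonempty := by
  obtain ⟨-, 𝒢, hcover, hsum⟩ := hq
  refine ⟨𝒢.image compl, ?_, fun G hG => ?_⟩
  · rw [sum_image fun _ _ _ _ h => compl_injective h]
    refine (sum_le_sum fun J _ => ?_).trans hsum
    rw [card_edgeFinset_compl, Fintype.card_fin]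
    calc Real.exp (-(δ * ↑(n.choose 2 - #J.edgeFinset) * p))
        = Real.exp (-(δ * p)) ^ (n.choose 2 - #J.edgeFinset) := by
          rw [← Real.exp_nat_mul]; ring_nf
      _ ≤ (1 - q) ^ (n.choose 2 - #J.edgeFinset) := pow_le_pow_left₀ (Real.exp_nonneg _) hp _
  · obtain ⟨J, hJ, hGJ⟩ := hcover G hG
    exact ⟨Jᶜ, mem_image_of_mem _ hJ, by convert not_nonempty_edgeFinset_inter_compl hGJ⟩

end Certificates

theorem expectation_threshold_lower_bound {V : Type*} [Fintype V] (F : SimpleGraph V)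
    (hF : ∃ v, 2 ≤ F.degree v) (ε δ : ℝ)
    (hε : ε ∈ Set.Ioc (0 : ℝ) (1 / 2)) (hδ : δ ∈ Set.Ioc (0 : ℝ) (1 / 2))
    (hlemma : ∀ n : ℕ, 1 ≤ n → ∀ p : ℝ, 0 < p → p ≤ ε * (n : ℝ) ^ (-1 / m2Dens F) →
      ∀ 𝓗 : Finset (SimpleGraph (Fin n)),
        (∑ H ∈ 𝓗, Real.exp (-(δ * (H.edgeFinset.card : ℝ) * p))) ≤ 1 / 2 →
        ∃ G : SimpleGraph (Fin n), FFree F G ∧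
          ∀ H ∈ 𝓗, (G.edgeFinset ∩ H.edgeFinset).Nonempty) :
    ∀ n : ℕ, 1 ≤ n → ∀ q : ℝ, IsLeast (certSet F n) q →
      δ * ε / 2 * (n : ℝ) ^ (-1 / m2Dens F) ≤ q := by
  intro n hn q hq
  have hF_ne : F ≠ ⊥ := by
    obtain ⟨v, hv⟩ := hF
    obtain ⟨w, hvw⟩ := (F.degree_pos_iff_exists_adj v).mp (by omega)
    exact ne_bot_iff_exists_adj.mpr ⟨v, w, hvw⟩
  set c := (n : ℝ) ^ (-1 / m2Dens F)
  have hc : c ≤ 1 := Real.rpow_le_one_of_one_le_of_nonpos (by exact_mod_cast hn)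
    (div_nonpos_of_nonpos_of_nonneg (by norm_num) (zero_le_one.trans (one_le_m2Dens F hF)))
  obtain ⟨hε0, hε1⟩ := hε
  obtain ⟨hδ0, hδ1⟩ := hδ
  by_contra! hlt
  have hq0 : 0 < q := pos_of_mem_certSet hF_ne hq.1
  have hq_half : q ≤ 1 / 2 := by
    linarith [mul_le_of_le_one_right (by positivity : 0 ≤ δ * ε / 2) hc,
      mul_le_mul hδ1 hε1 hε0.le (by norm_num)]
  set p := 2 * q / δ
  have hδp : δ * p = 2 * q := mul_div_cancel₀ _ hδ0.ne'
  obtain ⟨𝓗, hsum, hmiss⟩ := exists_compl_family_of_mem_certSet hq.1 (p := p)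
    (by rw [hδp]; exact Real.exp_neg_two_mul_le_one_sub hq0.le hq_half)
  have hp : p ≤ ε * c := by rw [div_le_iff₀ hδ0]; linarith
  obtain ⟨G, hG, hhit⟩ := hlemma n hn p (by positivity) hp 𝓗 hsum
  obtain ⟨H, hH, hGH⟩ := hmiss G hG
  exact hGH (hhit H hH)
end
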